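/- If the cost functions C_p : H × U → ℝ are Lipschitz in h with constant L uniformly in u ∈ U and p, then the empirical CVaR map h ↦ inf_{t∈ℝ} { t + (1/(Nα)) Σᵢ [C_p(h, ûⁱ) − t]₊ } is Lipschitz on H with constant L/α, provided the infimum is attained for each h. -/

import Mathlib

/-!
For a fixed level `t` the objective `t + (1/(Nα)) Σᵢ [xᵢ - t]₊` moves by at most `K/α` when every
sample cost `xᵢ` moves by at most `K`, because `[· - t]₊` is 1-Lipschitz. Infima of two functions
that attain them and differ uniformly by at most `K` differ by at most `K`; with `K = L‖h - h'‖`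
this gives the Lipschitz bound for the empirical CVaR.
-/

open Finset

theorem ciInf_eq_apply_of_forall_le {ι α : Type*} [ConditionallyCompleteLattice α] {f : ι → α}
    {i₀ : ι} (h : ∀ i, f i₀ ≤ f i) : ⨅ i, f i = f i₀ :=
  have : Nonempty ι := ⟨i₀⟩
  le_antisymm (ciInf_le ⟨f i₀, by rintro _ ⟨i, rfl⟩; exact h i⟩ i₀) (le_ciInf h)

theorem abs_ciInf_sub_ciInf_le {ι α : Type*} [ConditionallyCompleteLinearOrder α] [AddCommGroup α]
    [IsOrderedAddMonoid α] {f g : ι → α} {i₀ i₁ : ι} (hf : ∀ i, f i₀ ≤ f i)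
    (hg : ∀ i, g i₁ ≤ g i) {K : α} (hfg : ∀ i, |f i - g i| ≤ K) :
    |(⨅ i, f i) - ⨅ i, g i| ≤ K := by
  rw [ciInf_eq_apply_of_forall_le hf, ciInf_eq_apply_of_forall_le hg, abs_sub_le_iff]
  constructor
  · calc f i₀ - g i₁ ≤ f i₁ - g i₁ := sub_le_sub_right (hf i₁) _
      _ ≤ K := (abs_sub_le_iff.mp (hfg i₁)).1
  · calc g i₁ - f i₀ ≤ g i₀ - f i₀ := sub_le_sub_right (hg i₀) _
      _ ≤ K := (abs_sub_le_iff.mp (hfg i₀)).2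

/-- The Rockafellar–Uryasev objective whose infimum over `t` is the CVaR at level `α` of the
empirical distribution of the samples `x 0, …, x (N-1)`. -/
noncomputable def cvarObjective {N : ℕ} (α : ℝ) (x : Fin N → ℝ) (t : ℝ) : ℝ :=
  t + (1 / (N * α)) * ∑ i, max (x i - t) 0

theorem abs_cvarObjective_sub_le {N : ℕ} (hN : 0 < N) {α : ℝ} (hα : 0 ≤ α) {x y : Fin N → ℝ}
    {K : ℝ} (hxy : ∀ i, |x i - y i| ≤ K) (t : ℝ) :
    |cvarObjective α x t - cvarObjective α y t| ≤ K / α := by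
  have hc : 0 ≤ 1 / (N * α) := by positivity
  calc |cvarObjective α x t - cvarObjective α y t|
      = 1 / (N * α) * |∑ i, (max (x i - t) 0 - max (y i - t) 0)| := by
        rw [← abs_of_nonneg hc, ← abs_mul]
        simp only [cvarObjective, sum_sub_distrib]
        ring_nf
    _ ≤ 1 / (N * α) * ∑ _i : Fin N, K := by
        gcongr
        refine (abs_sum_le_sum_abs _ _).trans (sum_le_sum fun i _ => ?_)
        calc |max (x i - t) 0 - max (y i - t) 0| ≤ |(x i - t) - (y i - t)| :=
              abs_max_sub_max_le_abs _ _ _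
          _ = |x i - y i| := by rw [sub_sub_sub_cancel_right]
          _ ≤ K := hxy i
    _ = K / α := by
        rw [sum_const, card_univ, Fintype.card_fin, nsmul_eq_mul]
        field_simp

theorem stmt_5_general {U : Type*} (n N : ℕ) (hN : 0 < N)
    (H : Set (EuclideanSpace ℝ (Fin n)))
    (α L : ℝ) (hα : 0 < α)
    (uhat : Fin N → U) (Cp : EuclideanSpace ℝ (Fin n) → U → ℝ)
    (hLip : ∀ h ∈ H, ∀ h' ∈ H, ∀ u : U, |Cp h u - Cp h' u| ≤ L * ‖h - h'‖)
    (hmin : ∀ h ∈ H, ∃ t₀ : ℝ, ∀ t : ℝ,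
      t₀ + (1 / (N * α)) * ∑ i, max (Cp h (uhat i) - t₀) 0 ≤
        t + (1 / (N * α)) * ∑ i, max (Cp h (uhat i) - t) 0) :
    ∀ h ∈ H, ∀ h' ∈ H,
      |(⨅ t : ℝ, t + (1 / (N * α)) * ∑ i, max (Cp h (uhat i) - t) 0) -
        ⨅ t : ℝ, t + (1 / (N * α)) * ∑ i, max (Cp h' (uhat i) - t) 0| ≤
          (L / α) * ‖h - h'‖ := by
  intro h hh h' hh'
  obtain ⟨t₀, ht₀⟩ := hmin h hh
  obtain ⟨t₁, ht₁⟩ := hmin h' hh'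
  rw [div_mul_eq_mul_div]
  exact abs_ciInf_sub_ciInf_le (f := cvarObjective α fun i => Cp h (uhat i))
    (g := cvarObjective α fun i => Cp h' (uhat i)) ht₀ ht₁
    (abs_cvarObjective_sub_le hN hα.le fun i => hLip h hh h' hh' (uhat i))

theorem stmt_5 {U : Type*} (n N : ℕ) (hN : 0 < N)
    (H : Set (EuclideanSpace ℝ (Fin n))) (hH : H.Nonempty)
    (α L : ℝ) (hα : 0 < α) (hα1 : α < 1) (hL : 0 ≤ L)
    (uhat : Fin N → U) (Cp : EuclideanSpace ℝ (Fin n) → U → ℝ)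
    (hLip : ∀ h ∈ H, ∀ h' ∈ H, ∀ u : U, |Cp h u - Cp h' u| ≤ L * ‖h - h'‖)
    (hmin : ∀ h ∈ H, ∃ t₀ : ℝ, ∀ t : ℝ,
      t₀ + (1 / (N * α)) * ∑ i, max (Cp h (uhat i) - t₀) 0 ≤
        t + (1 / (N * α)) * ∑ i, max (Cp h (uhat i) - t) 0) :
    ∀ h ∈ H, ∀ h' ∈ H,
      |(⨅ t : ℝ, t + (1 / (N * α)) * ∑ i, max (Cp h (uhat i) - t) 0) -
        ⨅ t : ℝ, t + (1 / (N * α)) * ∑ i, max (Cp h' (uhat i) - t) 0| ≤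
          (L / α) * ‖h - h'‖ :=
  stmt_5_general n N hN H α L hα uhat Cp hLip hmin
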